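/- arXiv:2212.11404 — 6 statements merged into one kernel-verified Lean document; each statement's English description precedes it below -/
import Mathlib

section
/- Let G be a group, K a subgroup of G with infinitely many elements, q ≥ 1 a natural number, and H a finite group acting on Fin q and acting on a set Y. Let H act on (Fin q → G) × Y by h·((g_i)_i, y) = ((g_{h⁻¹·i})_i, h·y), and let G act on the quotient set Q = ((Fin q → G) × Y)/H by g·[(g_i)_i, y] = [(g*g_i)_i, y] (this is well defined since left multiplication commutes with the H-action). Then Q has no K-fixed points: for every x ∈ Q there exists κ ∈ K with κ·x ≠ x. In fact, the stabilizer in G of any point of Q has at most |H| elements. -/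
namespace Stmt3

variable {q : ℕ} {H : Type*} [Group H] [MulAction H (Fin q)] {G : Type*} [Group G]
  {Y : Type*} [MulAction H Y]

/-- The action of `H` on `Fin q → G` given by `(h • g) i = g (h⁻¹ • i)`. -/
instance domAction : MulAction H (Fin q → G) where
  smul h g := fun i => g (h⁻¹ • i)
  one_smul g := by
    funext i
    show g ((1 : H)⁻¹ • i) = g i
    rw [inv_one, one_smul]
  mul_smul h₁ h₂ g := by
    funext i
    show g ((h₁ * h₂)⁻¹ • i) = g (h₂⁻¹ • h₁⁻¹ • i)
    rw [mul_inv_rev, mul_smul]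

/-- The (well-defined) action of `g ∈ G` on the quotient
`Q = ((Fin q → G) × Y)/H`, sending `[(gᵢ)ᵢ, y]` to `[(g * gᵢ)ᵢ, y]`;
this is well defined since left multiplication by `g` commutes with the `H`-action. -/
def QAct (g : G) :
    Quotient (MulAction.orbitRel H ((Fin q → G) × Y)) →
    Quotient (MulAction.orbitRel H ((Fin q → G) × Y)) :=
  Quotient.map' (fun x => (fun i => g * x.1 i, x.2)) (by
    intro a b hab
    rw [Setoid.comm'] at hab
    rw [Setoid.comm']
    rw [MulAction.orbitRel_apply] at hab ⊢
    obtain ⟨h, rfl⟩ := hab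
    exact ⟨h, rfl⟩)

/-- Let `K ≤ G` be an infinite subgroup, `q ≥ 1`, and `H` a finite group
acting on `Fin q` and on a set `Y`.  Then the induced `G`-action on the quotient
`Q = ((Fin q → G) × Y)/H` has no `K`-fixed points; in fact the stabilizer in `G` of any
point of `Q` has at most `|H|` elements. -/
theorem stmt_3 [Finite H] (K : Subgroup G) (hK : (K : Set G).Infinite) (hq : 1 ≤ q) :
    (∀ x : Quotient (MulAction.orbitRel H ((Fin q → G) × Y)),
      ∃ κ ∈ K, QAct κ x ≠ x) ∧
    (∀ x : Quotient (MulAction.orbitRel H ((Fin q → G) × Y)),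
      Nat.card {g : G // QAct g x = x} ≤ Nat.card H) := by
  have key : ∀ x : Quotient (MulAction.orbitRel H ((Fin q → G) × Y)),
      ∃ F : {g : G // QAct g x = x} → H, Function.Injective F := by
    intro x
    obtain ⟨⟨f, y⟩, rfl⟩ := Quotient.exists_rep x
    have i₀ : Fin q := ⟨0, hq⟩
    have hmem : ∀ g : G, QAct g (⟦(f, y)⟧ : Quotient (MulAction.orbitRel H ((Fin q → G) × Y)))
        = ⟦(f, y)⟧ →
        ∃ h : H, h • ((f, y) : (Fin q → G) × Y) = (fun i => g * f i, y) := by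
      intro g hg
      have h1 : (Quotient.mk'' ((fun i => g * f i, y) : (Fin q → G) × Y) :
          Quotient (MulAction.orbitRel H ((Fin q → G) × Y))) = Quotient.mk'' (f, y) := hg
      rw [Quotient.eq'', MulAction.orbitRel_apply, MulAction.mem_orbit_iff] at h1
      exact h1
    refine ⟨fun g => Classical.choose (hmem g.1 g.2), ?_⟩
    rintro ⟨g₁, hg₁⟩ ⟨g₂, hg₂⟩ he
    have s₁ := Classical.choose_spec (hmem g₁ hg₁)
    have s₂ := Classical.choose_spec (hmem g₂ hg₂)
    simp only at he
    rw [he] at s₁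
    have : g₁ * f i₀ = g₂ * f i₀ := by
      have e1 := congrFun (congrArg Prod.fst s₁) i₀
      have e2 := congrFun (congrArg Prod.fst s₂) i₀
      exact e1.symm.trans e2
    exact Subtype.ext (mul_right_cancel this)
  constructor
  · intro x
    obtain ⟨F, hF⟩ := key x
    have hfin : ({g : G | QAct g x = x}).Finite :=
      Set.finite_coe_iff.mp (Finite.of_injective (fun g => F ⟨g.1, g.2⟩)
        (fun a b h => Subtype.ext (congrArg Subtype.val (hF h))))
    by_contra hcon
    push_neg at hcon
    have hsub : (K : Set G) ⊆ {g : G | QAct g x = x} := fun g hg => hcon g hg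
    exact (hK.mono hsub) hfin
  · intro x
    obtain ⟨F, hF⟩ := key x
    exact Nat.card_le_card_of_injective F hF

end Stmt3
end

section
/- With the circle setup and for n ≥ 2: the projection uE′(n) → uE(n) forgetting the gap coordinates (φ_j)_j, and the map uE(n) → uE′(n) sending ((ζ_j, r_j)_j) to ((ζ_j, r_j)_j, (θ_j)_j) where θ_j := δ(π(ζ_{j+1 mod n}) − π(ζ_j)), are both well defined, and they are mutually inverse homeomorphisms. Moreover both maps commute with: (a) simultaneous translation of all ζ_j by a fixed element of S¹; (b) the cyclic shift of indices j ↦ j+1 mod n applied simultaneously to the ζ_j, r_j (and φ_j); (c) translation of each individual ζ_j by elements of ker π. -/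
noncomputable section

open Set

/-- The additive circle `S¹ = ℝ/2πℤ`. -/
abbrev S1 : Type := AddCircle (2 * Real.pi)

/-- The additive circle `B = ℝ/(2π/m)ℤ`, modeling `S¹/C_m`. -/
abbrev CircB (m : ℕ) : Type := AddCircle (2 * Real.pi / m)

/-- The arc `A(ζ, r) = {π(ζ) + s̄ : |s| < r} ∪ {π(ζ)} ⊆ B`. -/
def arcA (m : ℕ) (pr : S1 → CircB m) (ζ : S1) (r : ℝ) : Set (CircB m) :=
  insert (pr ζ) {z | ∃ s : ℝ, |s| < r ∧ z = pr ζ + ((s : ℝ) : CircB m)}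

/-- The space `uE(n)` of cyclically ordered configurations of disjoint arcs. -/
def uE (m n : ℕ) [NeZero n] (pr : S1 → CircB m) (δ : CircB m → ℝ) :
    Set (Fin n → S1 × ℝ) :=
  {x | (∀ j, (x j).2 ∈ Ioc 0 (Real.pi / m)) ∧
    (∀ i j, i ≠ j → arcA m pr (x i).1 (x i).2 ∩ arcA m pr (x j).1 (x j).2 = ∅) ∧
    ∀ i j : Fin n, 0 < (i : ℕ) → (i : ℕ) < (j : ℕ) →
      δ (pr (x i).1 - pr (x 0).1) < δ (pr (x j).1 - pr (x 0).1)}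

/-- The space `uE′(n)` of configurations of disjoint arcs together with gap coordinates. -/
def uE' (m n : ℕ) [NeZero n] (pr : S1 → CircB m) :
    Set ((Fin n → S1 × ℝ) × (Fin n → ℝ)) :=
  {x | (∀ j, (x.1 j).2 ∈ Ioc 0 (Real.pi / m)) ∧
    (∀ j, x.2 j ∈ Ioo 0 (2 * Real.pi / m)) ∧
    (∀ i j, i ≠ j → arcA m pr (x.1 i).1 (x.1 i).2 ∩ arcA m pr (x.1 j).1 (x.1 j).2 = ∅) ∧
    (∀ j, pr (x.1 (j + 1)).1 = pr (x.1 j).1 + ((x.2 j : ℝ) : CircB m)) ∧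
    ∑ j, x.2 j = 2 * Real.pi / m}

/-- The map `uE(n) → uE′(n)` filling in the gap coordinates
`θ_j = δ(π(ζ_{j+1 mod n}) − π(ζ_j))`. -/
def theta (m n : ℕ) [NeZero n] (pr : S1 → CircB m) (δ : CircB m → ℝ)
    (x : Fin n → S1 × ℝ) : (Fin n → S1 × ℝ) × (Fin n → ℝ) :=
  (x, fun j => δ (pr (x (j + 1)).1 - pr (x j).1))

/-- Simultaneous translation of all circle coordinates by `a ∈ S¹`. -/
def transX (n : ℕ) (a : S1) (x : Fin n → S1 × ℝ) : Fin n → S1 × ℝ :=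
  fun j => ((x j).1 + a, (x j).2)

/-- Simultaneous translation on configurations with gaps. -/
def transP (n : ℕ) (a : S1) (y : (Fin n → S1 × ℝ) × (Fin n → ℝ)) :
    (Fin n → S1 × ℝ) × (Fin n → ℝ) :=
  (transX n a y.1, y.2)

/-- Cyclic shift of indices `j ↦ j + 1 (mod n)`. -/
def shiftX (n : ℕ) [NeZero n] (x : Fin n → S1 × ℝ) : Fin n → S1 × ℝ :=
  fun j => x (j - 1)

/-- Cyclic shift of indices on configurations with gaps. -/
def shiftP (n : ℕ) [NeZero n] (y : (Fin n → S1 × ℝ) × (Fin n → ℝ)) :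
    (Fin n → S1 × ℝ) × (Fin n → ℝ) :=
  (shiftX n y.1, fun j => y.2 (j - 1))

/-- Translation of each individual circle coordinate `ζ_j` by `k j`. -/
def kerX (n : ℕ) (k : Fin n → S1) (x : Fin n → S1 × ℝ) : Fin n → S1 × ℝ :=
  fun j => ((x j).1 + k j, (x j).2)

/-- Individual translations on configurations with gaps. -/
def kerP (n : ℕ) (k : Fin n → S1) (y : (Fin n → S1 × ℝ) × (Fin n → ℝ)) :
    (Fin n → S1 × ℝ) × (Fin n → ℝ) :=
  (kerX n k y.1, y.2)

/-!
The disjoint arcs have pairwise distinct centres `pⱼ = π(ζⱼ)` in `B = ℝ/cℤ`. If gaps `φⱼ > 0`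
with `pⱼ₊₁ = pⱼ + φⱼ` sum to `c`, then `δ(pᵢ - p₀)` is the partial sum `φ₀ + ⋯ + φᵢ₋₁`, which
increases with `i`. Conversely, for cyclically ordered centres put `d₀ = 0`, `dᵢ = δ(pᵢ - p₀)`
for `0 < i < n` and `dₙ = c`: then `dᵢ₊₁ - dᵢ ∈ (0, c]` represents `pᵢ₊₁ - pᵢ`, so it is `θᵢ`,
and the `θᵢ` telescope to `c`. Both maps are continuous because `δ` is continuous away from `0`,
where all the differences `pᵢ₊₁ - pᵢ` lie. The symmetries leave the gaps unchanged or shift them;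
invariance of `uE(n)` follows from that of `uE′(n)` through the two maps.
-/

open Fin.NatCast

def IsIocRepr (c : ℝ) (δ : AddCircle c → ℝ) : Prop :=
  ∀ z, δ z ∈ Ioc 0 c ∧ ((δ z : ℝ) : AddCircle c) = z

theorem AddCircle.apply_natCast_eq_add_sum_range {c : ℝ} {n : ℕ} [NeZero n]
    {p : Fin n → AddCircle c} {φ : Fin n → ℝ} (hp : ∀ j, p (j + 1) = p j + φ j) (i : ℕ) :
    p i = p 0 + ((∑ l ∈ Finset.range i, φ l : ℝ) : AddCircle c) := by
  induction i with
  | zero => simp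
  | succ i ih => rw [Nat.cast_succ, hp, ih, Finset.sum_range_succ, AddCircle.coe_add, add_assoc]

namespace IsIocRepr

variable {c : ℝ} {δ : AddCircle c → ℝ} (hδ : IsIocRepr c δ)
include hδ

theorem period_pos : 0 < c := (hδ 0).1.1.trans_le (hδ 0).1.2

theorem eq_of_coe_eq {z : AddCircle c} {t : ℝ} (ht : t ∈ Ioc 0 c)
    (h : ((t : ℝ) : AddCircle c) = z) : δ z = t := by
  have := Fact.mk hδ.period_pos
  refine (AddCircle.coe_eq_coe_iff_of_mem_Ioc (a := 0) ?_ ?_).1 ((hδ z).2.trans h.symm)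
  · simpa using (hδ z).1
  · simpa using ht

theorem apply_zero : δ 0 = c :=
  hδ.eq_of_coe_eq ⟨hδ.period_pos, le_rfl⟩ (AddCircle.coe_period c)

theorem lt_of_ne_zero {z : AddCircle c} (hz : z ≠ 0) : δ z < c :=
  (hδ z).1.2.lt_of_ne fun h => hz (by rw [← (hδ z).2, h, AddCircle.coe_period])

theorem continuousAt {z : AddCircle c} (hz : z ≠ 0) : ContinuousAt δ z := by
  have := Fact.mk hδ.period_pos
  have hδ_eq : δ = fun w => (AddCircle.equivIoc c 0 w : ℝ) := funext fun w =>
    hδ.eq_of_coe_eq (by simpa using (AddCircle.equivIoc c 0 w).2) AddCircle.coe_equivIoc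
  rw [hδ_eq]
  exact continuous_subtype_val.continuousAt.comp
    (AddCircle.continuousAt_equivIoc c 0 (by rwa [AddCircle.coe_zero]))

variable {n : ℕ} [NeZero n] {p : Fin n → AddCircle c}

theorem sub_apply_zero_eq_sum_range {φ : Fin n → ℝ} (hφ : ∀ j, 0 < φ j)
    (hsum : ∑ j, φ j = c) (hp : ∀ j, p (j + 1) = p j + φ j) {i : ℕ} (hi : 0 < i) (hin : i ≤ n) :
    δ (p i - p 0) = ∑ l ∈ Finset.range i, φ l := by
  refine hδ.eq_of_coe_eq ⟨Finset.sum_pos (fun l _ => hφ l) (Finset.nonempty_range_iff.2 hi.ne'), ?_⟩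
    (by rw [AddCircle.apply_natCast_eq_add_sum_range hp, add_sub_cancel_left])
  calc ∑ l ∈ Finset.range i, φ l ≤ ∑ l ∈ Finset.range n, φ l :=
        Finset.sum_le_sum_of_subset_of_nonneg (Finset.range_subset_range.2 hin)
          fun l _ _ => (hφ l).le
    _ = c := by rw [← Fin.sum_univ_eq_sum_range, ← hsum]; simp only [Fin.cast_val_eq_self]

theorem sub_apply_zero_strictMono_of_gaps {φ : Fin n → ℝ} (hφ : ∀ j, 0 < φ j)
    (hsum : ∑ j, φ j = c) (hp : ∀ j, p (j + 1) = p j + φ j) (i j : Fin n)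
    (hi : 0 < (i : ℕ)) (hij : (i : ℕ) < j) : δ (p i - p 0) < δ (p j - p 0) := by
  have hpartial (k : Fin n) (hk : 0 < (k : ℕ)) : δ (p k - p 0) = ∑ l ∈ Finset.range k, φ l := by
    simpa using hδ.sub_apply_zero_eq_sum_range hφ hsum hp hk k.isLt.le
  rw [hpartial i hi, hpartial j (hi.trans hij)]
  exact Finset.sum_lt_sum_of_subset (Finset.range_subset_range.2 hij.le)
    (Finset.mem_range.2 hij) (by simp) (hφ _) fun l _ _ => (hφ l).le

theorem sum_sub_eq_period (hp : ∀ i, i ≠ 0 → p i ≠ p 0)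
    (hord : ∀ i j : Fin n, 0 < (i : ℕ) → (i : ℕ) < j → δ (p i - p 0) < δ (p j - p 0)) :
    ∑ j, δ (p (j + 1) - p j) = c := by
  set d : ℕ → ℝ := fun i => if i = 0 then 0 else δ (p i - p 0) with hd
  have hd_nonneg (i : ℕ) : 0 ≤ d i := by
    by_cases hi : i = 0 <;> simp [hd, hi, ((hδ _).1.1).le]
  have hd_le (i : ℕ) : d i ≤ c := by
    by_cases hi : i = 0 <;> simp [hd, hi, hδ.period_pos.le, (hδ _).1.2]
  have hd_n : d n = c := by simp [hd, NeZero.ne n, hδ.apply_zero]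
  have hd_lt (i : ℕ) (hi : i < n) : d i < d (i + 1) := by
    rcases Nat.eq_zero_or_pos i with rfl | hi0
    · simpa [hd] using (hδ _).1.1
    rcases (show i + 1 ≤ n from hi).lt_or_eq with hi1 | rfl
    · simpa [hd, hi0.ne'] using
        hord i ((i + 1 : ℕ) : Fin n) (by rwa [Fin.val_cast_of_lt hi]) (by
          rw [Fin.val_cast_of_lt hi, Fin.val_cast_of_lt hi1]; omega)
    · rw [hd_n]
      simpa [hd, hi0.ne'] using hδ.lt_of_ne_zero (sub_ne_zero.2 (hp i fun h =>
        hi0.ne' (by simpa [Fin.ext_iff, Fin.val_cast_of_lt hi] using h)))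
  have hgap (i : ℕ) (hi : i < n) : δ (p (i + 1 : ℕ) - p i) = d (i + 1) - d i := by
    refine hδ.eq_of_coe_eq ⟨sub_pos.2 (hd_lt i hi), by linarith [hd_le (i + 1), hd_nonneg i]⟩ ?_
    rcases Nat.eq_zero_or_pos i with rfl | hi0
    · simp [hd, (hδ _).2]
    · simp [hd, hi0.ne', (hδ _).2]
  calc ∑ j, δ (p (j + 1) - p j) = ∑ i ∈ Finset.range n, δ (p (i + 1 : ℕ) - p i) := by
        rw [← Fin.sum_univ_eq_sum_range]; simp
    _ = ∑ i ∈ Finset.range n, (d (i + 1) - d i) :=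
        Finset.sum_congr rfl fun i hi => hgap i (Finset.mem_range.1 hi)
    _ = c := by rw [Finset.sum_range_sub, hd_n]; simp [hd]

end IsIocRepr

namespace ArcConfig

variable {m n : ℕ} {pr : S1 → CircB m}

theorem pr_ne_of_arcA_inter_eq_empty {ζ ξ : S1} {r s : ℝ}
    (h : arcA m pr ζ r ∩ arcA m pr ξ s = ∅) : pr ζ ≠ pr ξ := fun he =>
  eq_empty_iff_forall_notMem.1 h (pr ζ) ⟨mem_insert _ _, he ▸ mem_insert _ _⟩

theorem pr_succ_sub_ne_zero [NeZero n] (hn : 2 ≤ n) {x : Fin n → S1 × ℝ}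
    (hdis : ∀ i j, i ≠ j → arcA m pr (x i).1 (x i).2 ∩ arcA m pr (x j).1 (x j).2 = ∅)
    (j : Fin n) : pr (x (j + 1)).1 - pr (x j).1 ≠ 0 :=
  sub_ne_zero.2 (pr_ne_of_arcA_inter_eq_empty (hdis _ _ (by simpa using (by omega : n ≠ 1))))

section Projection

variable (hpr : ∀ s : ℝ, pr (s : S1) = (s : CircB m))
include hpr

theorem pr_add (ζ ξ : S1) : pr (ζ + ξ) = pr ζ + pr ξ := by
  induction ζ using QuotientAddGroup.induction_on with | H s =>
  induction ξ using QuotientAddGroup.induction_on with | H t =>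
  rw [← AddCircle.coe_add, hpr, hpr, hpr, AddCircle.coe_add]

theorem continuous_pr : Continuous pr :=
  (QuotientAddGroup.isQuotientMap_mk _).continuous_iff.2 <|
    (AddCircle.continuous_mk' _).congr fun s => (hpr s).symm

theorem arcA_add (a ζ : S1) (r : ℝ) :
    arcA m pr (ζ + a) r = (· - pr a) ⁻¹' arcA m pr ζ r := by
  ext z
  simp only [arcA, pr_add hpr, mem_preimage, mem_insert_iff, mem_ofPred_eq, sub_eq_iff_eq_add,
    add_right_comm _ (pr a)]

theorem arcA_add_of_pr_eq_zero {k : S1} (hk : pr k = 0) (ζ : S1) (r : ℝ) :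
    arcA m pr (ζ + k) r = arcA m pr ζ r := by
  simp [arcA_add hpr, hk]

end Projection

variable [NeZero n] {δ : CircB m → ℝ}

theorem fst_mapsTo_uE (hδ : IsIocRepr _ δ) : MapsTo Prod.fst (uE' m n pr) (uE m n pr δ) :=
  fun _ ⟨hr, hφ, hdis, hrel, hsum⟩ =>
    ⟨hr, hdis, hδ.sub_apply_zero_strictMono_of_gaps (fun j => (hφ j).1) hsum hrel⟩

theorem theta_mapsTo_uE' (hn : 2 ≤ n) (hδ : IsIocRepr _ δ) :
    MapsTo (theta m n pr δ) (uE m n pr δ) (uE' m n pr) := by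
  rintro x ⟨hr, hdis, hord⟩
  refine ⟨hr, fun j => ⟨(hδ _).1.1, hδ.lt_of_ne_zero (pr_succ_sub_ne_zero hn hdis j)⟩, hdis,
    fun j => ?_, hδ.sum_sub_eq_period (fun i hi => ?_) hord⟩
  · show pr (x (j + 1)).1 = pr (x j).1 + ((δ _ : ℝ) : CircB m)
    rw [(hδ _).2, add_sub_cancel]
  · exact pr_ne_of_arcA_inter_eq_empty (hdis i 0 hi)

theorem invOn_theta_fst (hδ : IsIocRepr _ δ) :
    InvOn (theta m n pr δ) Prod.fst (uE' m n pr) (uE m n pr δ) := by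
  refine ⟨?_, fun _ _ => rfl⟩
  rintro ⟨x, φ⟩ ⟨-, hφ, -, hrel, -⟩
  refine Prod.ext rfl (funext fun j => hδ.eq_of_coe_eq (Ioo_subset_Ioc_self (hφ j)) ?_)
  rw [hrel j, add_sub_cancel_left]

theorem continuousOn_theta (hn : 2 ≤ n) (hpr : ∀ s : ℝ, pr (s : S1) = (s : CircB m))
    (hδ : IsIocRepr _ δ) : ContinuousOn (theta m n pr δ) (uE m n pr δ) := by
  intro x hx
  have := continuous_pr hpr
  refine (continuousAt_id.prodMk (continuousAt_pi.2 fun j => ?_)).continuousWithinAt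
  exact (hδ.continuousAt (pr_succ_sub_ne_zero hn hx.2.1 j)).comp
    (f := fun y : Fin n → S1 × ℝ => pr (y (j + 1)).1 - pr (y j).1) (by fun_prop)

def uE'HomeomorphUE (hn : 2 ≤ n) (hpr : ∀ s : ℝ, pr (s : S1) = (s : CircB m))
    (hδ : IsIocRepr _ δ) : uE' m n pr ≃ₜ uE m n pr δ where
  toFun := (fst_mapsTo_uE hδ).restrict _ _ _
  invFun := (theta_mapsTo_uE' hn hδ).restrict _ _ _
  left_inv y := Subtype.ext ((invOn_theta_fst hδ).1 y.2)
  right_inv _ := rfl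
  continuous_toFun := continuous_fst.continuousOn.mapsToRestrict _
  continuous_invFun := (continuousOn_theta hn hpr hδ).mapsToRestrict _

theorem mapsTo_uE_of_mapsTo_uE' (hn : 2 ≤ n) (hδ : IsIocRepr _ δ)
    {f : (Fin n → S1 × ℝ) × (Fin n → ℝ) → (Fin n → S1 × ℝ) × (Fin n → ℝ)}
    {g : (Fin n → S1 × ℝ) → Fin n → S1 × ℝ} (hf : MapsTo f (uE' m n pr) (uE' m n pr))
    (hfg : ∀ x, (f (theta m n pr δ x)).1 = g x) : MapsTo g (uE m n pr δ) (uE m n pr δ) :=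
  fun x hx => hfg x ▸ fst_mapsTo_uE hδ (hf (theta_mapsTo_uE' hn hδ hx))

theorem transP_mapsTo (hpr : ∀ s : ℝ, pr (s : S1) = (s : CircB m)) (a : S1) :
    MapsTo (transP n a) (uE' m n pr) (uE' m n pr) := by
  rintro ⟨x, φ⟩ ⟨hr, hφ, hdis, hrel, hsum⟩
  refine ⟨hr, hφ, fun i j hij => ?_, fun j => ?_, hsum⟩
  · simp only [transP, transX, arcA_add hpr, ← preimage_inter, hdis i j hij, preimage_empty]
  · simp only [transP, transX, pr_add hpr, hrel j, add_right_comm _ (pr a)]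

theorem kerP_mapsTo (hpr : ∀ s : ℝ, pr (s : S1) = (s : CircB m)) {k : Fin n → S1}
    (hk : ∀ j, pr (k j) = 0) : MapsTo (kerP n k) (uE' m n pr) (uE' m n pr) := by
  rintro ⟨x, φ⟩ ⟨hr, hφ, hdis, hrel, hsum⟩
  refine ⟨hr, hφ, fun i j hij => ?_, fun j => ?_, hsum⟩
  · simpa only [kerP, kerX, arcA_add_of_pr_eq_zero hpr (hk _)] using hdis i j hij
  · simp only [kerP, kerX, pr_add hpr, hk, add_zero, hrel j]

theorem shiftP_mapsTo : MapsTo (shiftP n) (uE' m n pr) (uE' m n pr) := by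
  rintro ⟨x, φ⟩ ⟨hr, hφ, hdis, hrel, hsum⟩
  refine ⟨fun j => hr (j - 1), fun j => hφ (j - 1),
    fun i j hij => hdis _ _ (sub_left_injective.ne hij), fun j => ?_, ?_⟩
  · show pr (x (j + 1 - 1)).1 = _
    rw [← sub_add_eq_add_sub]
    exact hrel (j - 1)
  · rw [← hsum]
    exact (Equiv.subRight 1).sum_comp φ

theorem theta_transX (hpr : ∀ s : ℝ, pr (s : S1) = (s : CircB m)) (a : S1)
    (x : Fin n → S1 × ℝ) : theta m n pr δ (transX n a x) = transP n a (theta m n pr δ x) := by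
  simp only [theta, transP, transX, pr_add hpr, add_sub_add_right_eq_sub]

theorem theta_kerX (hpr : ∀ s : ℝ, pr (s : S1) = (s : CircB m)) {k : Fin n → S1}
    (hk : ∀ j, pr (k j) = 0) (x : Fin n → S1 × ℝ) :
    theta m n pr δ (kerX n k x) = kerP n k (theta m n pr δ x) := by
  simp only [theta, kerP, kerX, pr_add hpr, hk, add_zero]

theorem theta_shiftX (x : Fin n → S1 × ℝ) :
    theta m n pr δ (shiftX n x) = shiftP n (theta m n pr δ x) := by
  simp only [theta, shiftP, shiftX, ← sub_add_eq_add_sub]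

end ArcConfig

open ArcConfig in
theorem stmt_5_general (m n : ℕ) (hn : 2 ≤ n) [NeZero n]
    (pr : S1 → CircB m) (hpr : ∀ s : ℝ, pr ((s : ℝ) : S1) = ((s : ℝ) : CircB m))
    (δ : CircB m → ℝ)
    (hδ : ∀ z : CircB m, δ z ∈ Ioc 0 (2 * Real.pi / m) ∧ ((δ z : ℝ) : CircB m) = z) :
    Set.MapsTo Prod.fst (uE' m n pr) (uE m n pr δ) ∧
    Set.MapsTo (theta m n pr δ) (uE m n pr δ) (uE' m n pr) ∧
    Set.InvOn (theta m n pr δ) Prod.fst (uE' m n pr) (uE m n pr δ) ∧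
    (∃ e : ↥(uE' m n pr) ≃ₜ ↥(uE m n pr δ),
      (∀ y : ↥(uE' m n pr), (e y).val = y.val.1) ∧
      (∀ x : ↥(uE m n pr δ), (e.symm x).val = theta m n pr δ x.val)) ∧
    (∀ a : S1,
      Set.MapsTo (transX n a) (uE m n pr δ) (uE m n pr δ) ∧
      Set.MapsTo (transP n a) (uE' m n pr) (uE' m n pr) ∧
      (∀ x ∈ uE m n pr δ, theta m n pr δ (transX n a x) = transP n a (theta m n pr δ x)) ∧
      (∀ y ∈ uE' m n pr, (transP n a y).1 = transX n a y.1)) ∧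
    (Set.MapsTo (shiftX n) (uE m n pr δ) (uE m n pr δ) ∧
      Set.MapsTo (shiftP n) (uE' m n pr) (uE' m n pr) ∧
      (∀ x ∈ uE m n pr δ, theta m n pr δ (shiftX n x) = shiftP n (theta m n pr δ x)) ∧
      (∀ y ∈ uE' m n pr, (shiftP n y).1 = shiftX n y.1)) ∧
    (∀ k : Fin n → S1, (∀ j, pr (k j) = 0) →
      Set.MapsTo (kerX n k) (uE m n pr δ) (uE m n pr δ) ∧
      Set.MapsTo (kerP n k) (uE' m n pr) (uE' m n pr) ∧
      (∀ x ∈ uE m n pr δ, theta m n pr δ (kerX n k x) = kerP n k (theta m n pr δ x)) ∧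
      (∀ y ∈ uE' m n pr, (kerP n k y).1 = kerX n k y.1)) := by
  have hδ : IsIocRepr _ δ := hδ
  refine ⟨fst_mapsTo_uE hδ, theta_mapsTo_uE' hn hδ, invOn_theta_fst hδ,
    ⟨uE'HomeomorphUE hn hpr hδ, fun _ => rfl, fun _ => rfl⟩,
    fun a => ⟨mapsTo_uE_of_mapsTo_uE' hn hδ (transP_mapsTo hpr a) fun _ => rfl,
      transP_mapsTo hpr a, fun x _ => theta_transX hpr a x, fun _ _ => rfl⟩,
    ⟨mapsTo_uE_of_mapsTo_uE' hn hδ shiftP_mapsTo fun _ => rfl,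
      shiftP_mapsTo, fun x _ => theta_shiftX x, fun _ _ => rfl⟩,
    fun k hk => ⟨mapsTo_uE_of_mapsTo_uE' hn hδ (kerP_mapsTo hpr hk) fun _ => rfl,
      kerP_mapsTo hpr hk, fun x _ => theta_kerX hpr hk x, fun _ _ => rfl⟩⟩

/-- The projection `uE′(n) → uE(n)` forgetting the gap coordinates and
the map `uE(n) → uE′(n)` filling in the gaps `θ_j = δ(π(ζ_{j+1}) − π(ζ_j))` are well
defined, mutually inverse homeomorphisms, and both commute with (a) simultaneous
translation by elements of `S¹`, (b) the cyclic shift of indices, and (c) translation of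
the individual `ζ_j` by elements of `ker π`. -/
theorem stmt_5 (m n : ℕ) (hm : 1 ≤ m) (hn : 2 ≤ n) [NeZero n]
    (pr : S1 → CircB m) (hpr : ∀ s : ℝ, pr ((s : ℝ) : S1) = ((s : ℝ) : CircB m))
    (δ : CircB m → ℝ)
    (hδ : ∀ z : CircB m, δ z ∈ Ioc 0 (2 * Real.pi / m) ∧ ((δ z : ℝ) : CircB m) = z) :
    Set.MapsTo Prod.fst (uE' m n pr) (uE m n pr δ) ∧
    Set.MapsTo (theta m n pr δ) (uE m n pr δ) (uE' m n pr) ∧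
    Set.InvOn (theta m n pr δ) Prod.fst (uE' m n pr) (uE m n pr δ) ∧
    (∃ e : ↥(uE' m n pr) ≃ₜ ↥(uE m n pr δ),
      (∀ y : ↥(uE' m n pr), (e y).val = y.val.1) ∧
      (∀ x : ↥(uE m n pr δ), (e.symm x).val = theta m n pr δ x.val)) ∧
    (∀ a : S1,
      Set.MapsTo (transX n a) (uE m n pr δ) (uE m n pr δ) ∧
      Set.MapsTo (transP n a) (uE' m n pr) (uE' m n pr) ∧
      (∀ x ∈ uE m n pr δ, theta m n pr δ (transX n a x) = transP n a (theta m n pr δ x)) ∧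
      (∀ y ∈ uE' m n pr, (transP n a y).1 = transX n a y.1)) ∧
    (Set.MapsTo (shiftX n) (uE m n pr δ) (uE m n pr δ) ∧
      Set.MapsTo (shiftP n) (uE' m n pr) (uE' m n pr) ∧
      (∀ x ∈ uE m n pr δ, theta m n pr δ (shiftX n x) = shiftP n (theta m n pr δ x)) ∧
      (∀ y ∈ uE' m n pr, (shiftP n y).1 = shiftX n y.1)) ∧
    (∀ k : Fin n → S1, (∀ j, pr (k j) = 0) →
      Set.MapsTo (kerX n k) (uE m n pr δ) (uE m n pr δ) ∧
      Set.MapsTo (kerP n k) (uE' m n pr) (uE' m n pr) ∧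
      (∀ x ∈ uE m n pr δ, theta m n pr δ (kerX n k x) = kerP n k (theta m n pr δ x)) ∧
      (∀ y ∈ uE' m n pr, (kerP n k y).1 = kerX n k y.1)) :=
  stmt_5_general m n hn pr hpr δ hδ

end
end

section
/- With the circle setup and for n ≥ 2, let X(n) be the subspace of (S¹)^n × [0, c]^n of tuples ((ζ_j)_j, (φ_j)_j) with π(ζ_{j+1 mod n}) = π(ζ_j) + φ̄_j for all j and φ_0 + … + φ_{n−1} = c. Define F : X(n) × [0,1] → X(n) by F(((ζ_j)_j, (φ_j)_j), t) = ((ζ_j + (t·φ_j/2)‾)_j, ((1 − t/2)·φ_j + (t/2)·φ_{j+1 mod n})_j). Then: (i) F is well defined (its values lie in X(n)) and continuous, and F(·, 0) is the identity; (ii) every time-slice F(·, t) commutes with simultaneous translation of all ζ_j by a fixed element of S¹, with the cyclic shift of indices applied simultaneously to the ζ_j and φ_j, and with translation of each individual ζ_j by elements of ker π; (iii) writing f := F(·, 1), for every point of X(n) whose set Z = {j : φ_j = 0} of vanishing gaps is nonempty, the image point under f has strictly fewer vanishing gaps than |Z|; (iv) consequently the n-fold iterate f^n maps X(n) into the subspace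 X_0(n) where all φ_j > 0. -/
noncomputable section

open Set

/-- The space `X(n)` of tuples `((ζ_j)_j, (φ_j)_j)` with `φ_j ∈ [0, c]`,
`π(ζ_{j+1}) = π(ζ_j) + φ̄_j`, and `φ_0 + … + φ_{n−1} = c` (where `c = 2π/m`). -/
def Xn (m n : ℕ) [NeZero n] (pr : S1 → CircB m) :
    Set ((Fin n → S1) × (Fin n → ℝ)) :=
  {x | (∀ j, x.2 j ∈ Icc 0 (2 * Real.pi / m)) ∧
    (∀ j, pr (x.1 (j + 1)) = pr (x.1 j) + ((x.2 j : ℝ) : CircB m)) ∧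
    ∑ j, x.2 j = 2 * Real.pi / m}

/-- The nudging homotopy
`F(((ζ_j)_j, (φ_j)_j), t) = ((ζ_j + (t·φ_j/2)‾)_j, ((1 − t/2)·φ_j + (t/2)·φ_{j+1})_j)`. -/
def Fmap (n : ℕ) [NeZero n] :
    (((Fin n → S1) × (Fin n → ℝ)) × ℝ) → (Fin n → S1) × (Fin n → ℝ) :=
  fun p => (fun j => p.1.1 j + ((p.2 * p.1.2 j / 2 : ℝ) : S1),
    fun j => (1 - p.2 / 2) * p.1.2 j + (p.2 / 2) * p.1.2 (j + 1))

/-! At time `t` the gaps become convex combinations `(1 - t/2) φ_j + (t/2) φ_{j+1}`, which stay in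
`[0, c]` and, after reindexing, keep the sum `c`; the rotation of `ζ_j` by `t φ_j / 2` is exactly
what keeps `π(ζ_{j+1}) = π(ζ_j) + φ_j`. At `t = 1` a gap vanishes iff two consecutive old gaps
vanish, so `Z` becomes `Z ∩ (Z - 1)`, a proper subset of `Z` unless `Z` is invariant under
`j ↦ j + 1`, i.e. empty or everything; the latter is impossible as the gaps sum to `c > 0`.
Since `|Z| < n`, after `n` steps no gap vanishes. -/

lemma AddCircle.map_add_of_map_coe {p q : ℝ} {pr : AddCircle p → AddCircle q}
    (hpr : ∀ s : ℝ, pr s = s) (a b : AddCircle p) : pr (a + b) = pr a + pr b := by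
  obtain ⟨u, rfl⟩ := QuotientAddGroup.mk_surjective a
  obtain ⟨v, rfl⟩ := QuotientAddGroup.mk_surjective b
  rw [← AddCircle.coe_add, hpr, hpr, hpr, AddCircle.coe_add]

open Fin.NatCast in
lemma Fin.eq_univ_of_add_one_mem {n : ℕ} [NeZero n] {S : Set (Fin n)} (hne : S.Nonempty)
    (hS : ∀ j ∈ S, j + 1 ∈ S) : S = univ := by
  obtain ⟨j₀, hj₀⟩ := hne
  have hreach : ∀ k : ℕ, j₀ + (k : Fin n) ∈ S := by
    intro k
    induction k with
    | zero => simpa using hj₀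
    | succ k ih => simpa [add_assoc] using hS _ ih
  refine eq_univ_of_forall fun i => ?_
  simpa using hreach (i - j₀).val

lemma Fin.ncard_inter_preimage_add_one_lt {n : ℕ} [NeZero n] {S : Set (Fin n)}
    (hne : S.Nonempty) (hS : S ≠ univ) : (S ∩ (· + 1) ⁻¹' S).ncard < S.ncard := by
  refine ncard_lt_ncard (inter_subset_left.ssubset_of_ne fun h => hS ?_) (toFinite _)
  exact Fin.eq_univ_of_add_one_mem hne fun j hj => (h ▸ hj : j ∈ S ∩ _).2

lemma Set.MapsTo.apply_iterate_eq_zero {α : Type*} {s : Set α} {f : α → α} {v : α → ℕ}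
    (hf : MapsTo f s s) (hv : ∀ x ∈ s, v (f x) < v x ∨ v (f x) = 0) {k : ℕ} {x : α}
    (hx : x ∈ s) (hk : v x ≤ k) : v (f^[k] x) = 0 := by
  induction k generalizing x with
  | zero => simpa using hk
  | succ k ih =>
    rw [Function.iterate_succ_apply]
    exact ih (hf hx) (by rcases hv x hx with h | h <;> omega)

section Nudging

variable {m n : ℕ} [NeZero n] {pr : S1 → CircB m}

def vanishingGaps (x : (Fin n → S1) × (Fin n → ℝ)) : Set (Fin n) := {j | x.2 j = 0}

lemma continuous_Fmap : Continuous (Fmap n) := by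
  refine .prodMk (continuous_pi fun j => ?_) (by fun_prop)
  exact ((continuous_apply j).comp (continuous_fst.comp continuous_fst)).add
    ((AddCircle.continuous_mk' _).comp (by fun_prop))

lemma Fmap_zero (x : (Fin n → S1) × (Fin n → ℝ)) : Fmap n (x, 0) = x := by
  ext j <;> simp [Fmap]

lemma Fmap_translate (k : Fin n → S1) (x : (Fin n → S1) × (Fin n → ℝ)) (t : ℝ) :
    Fmap n ((fun j => x.1 j + k j, x.2), t) =
      (fun j => (Fmap n (x, t)).1 j + k j, (Fmap n (x, t)).2) :=
  Prod.ext (funext fun _ => add_right_comm _ _ _) rfl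

lemma Fmap_shift (x : (Fin n → S1) × (Fin n → ℝ)) (t : ℝ) :
    Fmap n ((fun j => x.1 (j - 1), fun j => x.2 (j - 1)), t) =
      (fun j => (Fmap n (x, t)).1 (j - 1), fun j => (Fmap n (x, t)).2 (j - 1)) := by
  refine Prod.ext rfl (funext fun j => ?_)
  simp only [Fmap, sub_add_cancel, add_sub_cancel_right]

namespace Xn

lemma gap_nonneg {x : (Fin n → S1) × (Fin n → ℝ)} (hx : x ∈ Xn m n pr) (j : Fin n) :
    0 ≤ x.2 j :=
  (hx.1 j).1

lemma mapsTo_translate (hpr : ∀ s : ℝ, pr s = s) (k : Fin n → S1)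
    (hk : ∀ j, pr (k (j + 1)) = pr (k j)) :
    MapsTo (fun x : (Fin n → S1) × (Fin n → ℝ) => (fun j => x.1 j + k j, x.2))
      (Xn m n pr) (Xn m n pr) := by
  rintro x ⟨hbound, hstep, hsum⟩
  refine ⟨hbound, fun j => ?_, hsum⟩
  simp only [AddCircle.map_add_of_map_coe hpr, hstep j, hk j]
  abel

lemma mapsTo_shift :
    MapsTo (fun x : (Fin n → S1) × (Fin n → ℝ) =>
        ((fun j => x.1 (j - 1), fun j => x.2 (j - 1)) : (Fin n → S1) × (Fin n → ℝ)))
      (Xn m n pr) (Xn m n pr) := by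
  rintro x ⟨hbound, hstep, hsum⟩
  refine ⟨fun j => hbound _, fun j => ?_, ?_⟩
  · simpa only [sub_add_cancel, add_sub_cancel_right] using hstep (j - 1)
  · exact (Fintype.sum_equiv (Equiv.subRight 1) _ x.2 fun _ => rfl).trans hsum

lemma mapsTo_Fmap (hpr : ∀ s : ℝ, pr s = s) {t : ℝ} (ht : t ∈ Icc (0 : ℝ) 1) :
    MapsTo (fun x => Fmap n (x, t)) (Xn m n pr) (Xn m n pr) := by
  rintro x ⟨hbound, hstep, hsum⟩
  refine ⟨fun j => ?_, fun j => ?_, ?_⟩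
  · have hcombo : (1 - t / 2) • x.2 j + (t / 2) • x.2 (j + 1) ∈ Icc 0 (2 * Real.pi / m) :=
      convex_Icc _ _ (hbound j) (hbound (j + 1)) (by linarith [ht.2]) (by linarith [ht.1])
        (by ring)
    simpa only [smul_eq_mul, Fmap] using hcombo
  · simp only [Fmap, AddCircle.map_add_of_map_coe hpr, hpr, hstep j, add_assoc,
      ← AddCircle.coe_add]
    congr 2
    ring
  · simp only [Fmap, Finset.sum_add_distrib, ← Finset.mul_sum,
      Fintype.sum_equiv (Equiv.addRight 1) (fun j => x.2 (j + 1)) x.2 fun _ => rfl, hsum]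
    ring

/-- The gaps are nonnegative, so the average of two of them vanishes only if both do. -/
lemma vanishingGaps_Fmap_one {x : (Fin n → S1) × (Fin n → ℝ)} (hx : x ∈ Xn m n pr) :
    vanishingGaps (Fmap n (x, 1)) = vanishingGaps x ∩ (· + 1) ⁻¹' vanishingGaps x := by
  ext j
  have h₀ := gap_nonneg hx j
  have h₁ := gap_nonneg hx (j + 1)
  simp only [vanishingGaps, Fmap, mem_ofPred_eq, mem_inter_iff, mem_preimage]
  constructor
  · intro h
    constructor <;> linarith
  · rintro ⟨hj, hj'⟩
    rw [hj, hj']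
    ring

lemma vanishingGaps_ne_univ (hm : 1 ≤ m) {x : (Fin n → S1) × (Fin n → ℝ)}
    (hx : x ∈ Xn m n pr) : vanishingGaps x ≠ univ := by
  intro h
  have hc : 0 < 2 * Real.pi / m := div_pos Real.two_pi_pos (by exact_mod_cast hm)
  have hzero : ∀ j, x.2 j = 0 := fun j => (h ▸ mem_univ j : j ∈ vanishingGaps x)
  have := hx.2.2
  simp only [hzero, Finset.sum_const_zero] at this
  linarith

lemma ncard_vanishingGaps_Fmap_one_lt (hm : 1 ≤ m) {x : (Fin n → S1) × (Fin n → ℝ)}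
    (hx : x ∈ Xn m n pr) (hne : (vanishingGaps x).Nonempty) :
    (vanishingGaps (Fmap n (x, 1))).ncard < (vanishingGaps x).ncard := by
  rw [vanishingGaps_Fmap_one hx]
  exact Fin.ncard_inter_preimage_add_one_lt hne (vanishingGaps_ne_univ hm hx)

lemma ncard_vanishingGaps_Fmap_one_lt_or_eq_zero (hm : 1 ≤ m)
    {x : (Fin n → S1) × (Fin n → ℝ)} (hx : x ∈ Xn m n pr) :
    (vanishingGaps (Fmap n (x, 1))).ncard < (vanishingGaps x).ncard ∨
      (vanishingGaps (Fmap n (x, 1))).ncard = 0 := by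
  rcases (vanishingGaps x).eq_empty_or_nonempty with h | h
  · right
    rw [vanishingGaps_Fmap_one hx, h, empty_inter, ncard_empty]
  · exact .inl (ncard_vanishingGaps_Fmap_one_lt hm hx h)

lemma gap_iterate_Fmap_one_pos (hpr : ∀ s : ℝ, pr s = s) (hm : 1 ≤ m)
    {x : (Fin n → S1) × (Fin n → ℝ)} (hx : x ∈ Xn m n pr) (j : Fin n) :
    0 < ((fun y => Fmap n (y, 1))^[n] x).2 j := by
  have hf : MapsTo (fun y => Fmap n (y, 1)) (Xn m n pr) (Xn m n pr) :=
    mapsTo_Fmap hpr ⟨zero_le_one, le_rfl⟩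
  have hlt : (vanishingGaps x).ncard < n := by
    simpa using ncard_lt_ncard (ssubset_univ_iff.2 (vanishingGaps_ne_univ hm hx))
  have hzero := hf.apply_iterate_eq_zero (v := fun y => (vanishingGaps y).ncard)
    (fun _ hy => ncard_vanishingGaps_Fmap_one_lt_or_eq_zero hm hy) hx hlt.le
  rw [ncard_eq_zero] at hzero
  refine (gap_nonneg (hf.iterate n hx) j).lt_of_ne' fun h => ?_
  exact hzero.subset (h : j ∈ vanishingGaps _)

end Xn

end Nudging

theorem stmt_8_general (m n : ℕ) (hm : 1 ≤ m) [NeZero n]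
    (pr : S1 → CircB m) (hpr : ∀ s : ℝ, pr ((s : ℝ) : S1) = ((s : ℝ) : CircB m)) :
    -- (i)
    ((∀ t ∈ Icc (0 : ℝ) 1,
        Set.MapsTo (fun x => Fmap n (x, t)) (Xn m n pr) (Xn m n pr)) ∧
      ContinuousOn (Fmap n) ((Xn m n pr) ×ˢ Icc (0 : ℝ) 1) ∧
      (∀ x ∈ Xn m n pr, Fmap n (x, 0) = x)) ∧
    -- (ii)
    (∀ t ∈ Icc (0 : ℝ) 1,
      (∀ a : S1,
        Set.MapsTo (fun x : (Fin n → S1) × (Fin n → ℝ) => (fun j => x.1 j + a, x.2))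
          (Xn m n pr) (Xn m n pr) ∧
        ∀ x ∈ Xn m n pr,
          Fmap n (((fun j => x.1 j + a, x.2) : (Fin n → S1) × (Fin n → ℝ)), t) =
            (fun j => (Fmap n (x, t)).1 j + a, (Fmap n (x, t)).2)) ∧
      (Set.MapsTo (fun x : (Fin n → S1) × (Fin n → ℝ) =>
          ((fun j => x.1 (j - 1), fun j => x.2 (j - 1)) : (Fin n → S1) × (Fin n → ℝ)))
          (Xn m n pr) (Xn m n pr) ∧
        ∀ x ∈ Xn m n pr,
          Fmap n (((fun j => x.1 (j - 1), fun j => x.2 (j - 1)) :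
              (Fin n → S1) × (Fin n → ℝ)), t) =
            (fun j => (Fmap n (x, t)).1 (j - 1), fun j => (Fmap n (x, t)).2 (j - 1))) ∧
      (∀ k : Fin n → S1, (∀ j, pr (k j) = 0) →
        Set.MapsTo (fun x : (Fin n → S1) × (Fin n → ℝ) => (fun j => x.1 j + k j, x.2))
          (Xn m n pr) (Xn m n pr) ∧
        ∀ x ∈ Xn m n pr,
          Fmap n (((fun j => x.1 j + k j, x.2) : (Fin n → S1) × (Fin n → ℝ)), t) =
            (fun j => (Fmap n (x, t)).1 j + k j, (Fmap n (x, t)).2))) ∧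
    -- (iii)
    (∀ x ∈ Xn m n pr, ({j : Fin n | x.2 j = 0}).Nonempty →
      ({j : Fin n | (Fmap n (x, 1)).2 j = 0}).ncard < ({j : Fin n | x.2 j = 0}).ncard) ∧
    -- (iv)
    (∀ x ∈ Xn m n pr,
      (fun y => Fmap n (y, 1))^[n] x ∈ Xn m n pr ∧
      ∀ j, 0 < ((fun y => Fmap n (y, 1))^[n] x).2 j) := by
  have hk_ker : ∀ k : Fin n → S1, (∀ j, pr (k j) = 0) → ∀ j, pr (k (j + 1)) = pr (k j) :=
    fun k hk j => by rw [hk, hk]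
  refine ⟨⟨fun t ht => Xn.mapsTo_Fmap hpr ht, continuous_Fmap.continuousOn,
      fun x _ => Fmap_zero x⟩,
    fun t _ => ⟨fun a => ⟨Xn.mapsTo_translate hpr (fun _ => a) (fun _ => rfl),
        fun x _ => Fmap_translate (fun _ => a) x t⟩,
      ⟨Xn.mapsTo_shift, fun x _ => Fmap_shift x t⟩,
      fun k hk => ⟨Xn.mapsTo_translate hpr k (hk_ker k hk), fun x _ => Fmap_translate k x t⟩⟩,
    fun x hx hne => Xn.ncard_vanishingGaps_Fmap_one_lt hm hx hne,
    fun x hx => ⟨(Xn.mapsTo_Fmap hpr ⟨zero_le_one, le_rfl⟩).iterate n hx,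
      Xn.gap_iterate_Fmap_one_pos hpr hm hx⟩⟩

/-- The nudging homotopy `F` on `X(n)`: (i) it is well defined and
continuous, with `F(·,0)` the identity; (ii) its time-slices commute with simultaneous
translations, with the cyclic shift of indices, and with individual translations by
elements of `ker π`; (iii) `f = F(·,1)` strictly decreases the number of vanishing gaps
whenever that number is positive; (iv) hence the `n`-fold iterate of `f` maps `X(n)` into
the subspace where all gaps are positive. -/
theorem stmt_8 (m n : ℕ) (hm : 1 ≤ m) (hn : 2 ≤ n) [NeZero n]
    (pr : S1 → CircB m) (hpr : ∀ s : ℝ, pr ((s : ℝ) : S1) = ((s : ℝ) : CircB m)) :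
    -- (i)
    ((∀ t ∈ Icc (0 : ℝ) 1,
        Set.MapsTo (fun x => Fmap n (x, t)) (Xn m n pr) (Xn m n pr)) ∧
      ContinuousOn (Fmap n) ((Xn m n pr) ×ˢ Icc (0 : ℝ) 1) ∧
      (∀ x ∈ Xn m n pr, Fmap n (x, 0) = x)) ∧
    -- (ii)
    (∀ t ∈ Icc (0 : ℝ) 1,
      (∀ a : S1,
        Set.MapsTo (fun x : (Fin n → S1) × (Fin n → ℝ) => (fun j => x.1 j + a, x.2))
          (Xn m n pr) (Xn m n pr) ∧
        ∀ x ∈ Xn m n pr,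
          Fmap n (((fun j => x.1 j + a, x.2) : (Fin n → S1) × (Fin n → ℝ)), t) =
            (fun j => (Fmap n (x, t)).1 j + a, (Fmap n (x, t)).2)) ∧
      (Set.MapsTo (fun x : (Fin n → S1) × (Fin n → ℝ) =>
          ((fun j => x.1 (j - 1), fun j => x.2 (j - 1)) : (Fin n → S1) × (Fin n → ℝ)))
          (Xn m n pr) (Xn m n pr) ∧
        ∀ x ∈ Xn m n pr,
          Fmap n (((fun j => x.1 (j - 1), fun j => x.2 (j - 1)) :
              (Fin n → S1) × (Fin n → ℝ)), t) =
            (fun j => (Fmap n (x, t)).1 (j - 1), fun j => (Fmap n (x, t)).2 (j - 1))) ∧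
      (∀ k : Fin n → S1, (∀ j, pr (k j) = 0) →
        Set.MapsTo (fun x : (Fin n → S1) × (Fin n → ℝ) => (fun j => x.1 j + k j, x.2))
          (Xn m n pr) (Xn m n pr) ∧
        ∀ x ∈ Xn m n pr,
          Fmap n (((fun j => x.1 j + k j, x.2) : (Fin n → S1) × (Fin n → ℝ)), t) =
            (fun j => (Fmap n (x, t)).1 j + k j, (Fmap n (x, t)).2))) ∧
    -- (iii)
    (∀ x ∈ Xn m n pr, ({j : Fin n | x.2 j = 0}).Nonempty →
      ({j : Fin n | (Fmap n (x, 1)).2 j = 0}).ncard < ({j : Fin n | x.2 j = 0}).ncard) ∧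
    -- (iv)
    (∀ x ∈ Xn m n pr,
      (fun y => Fmap n (y, 1))^[n] x ∈ Xn m n pr ∧
      ∀ j, 0 < ((fun y => Fmap n (y, 1))^[n] x).2 j) :=
  stmt_8_general m n hm pr hpr

end
end

section
/- For every n ≥ 1, the space uD^c(n), defined as the set of pairs of tuples (v, r) ∈ (ℝ × ℝ)^n such that 0 ≤ r_j and |v_j| + r_j ≤ 1 for all 0 ≤ j ≤ n−1, v_j ≤ v_{j+1} for all 0 ≤ j ≤ n−2, and for each 0 ≤ j ≤ n−2 either v_j + r_j ≤ v_{j+1} − r_{j+1} or r_j = r_{j+1} = 0, topologized as a subspace of ℝ^{2n}, is contractible. -/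
/-- The ordered (non-Σ) part `uD^c(n)` of the extended one-dimensional little disks operad:
pairs `(v_j, r_j)` with `r_j ≥ 0`, `|v_j| + r_j ≤ 1`, weakly increasing centers, and
consecutive images disjoint except that overlapping images must both be degenerate. -/
def uDc (n : ℕ) : Set (Fin n → ℝ × ℝ) :=
  {x | (∀ j, 0 ≤ (x j).2 ∧ |(x j).1| + (x j).2 ≤ 1) ∧
    ∀ j : Fin n, ∀ h : (j : ℕ) + 1 < n,
      (x j).1 ≤ (x ⟨(j : ℕ) + 1, h⟩).1 ∧
      ((x j).1 + (x j).2 ≤ (x ⟨(j : ℕ) + 1, h⟩).1 - (x ⟨(j : ℕ) + 1, h⟩).2 ∨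
        ((x j).2 = 0 ∧ (x ⟨(j : ℕ) + 1, h⟩).2 = 0))}

lemma zero_mem_uDc (n : ℕ) : (0 : Fin n → ℝ × ℝ) ∈ uDc n := by
  constructor
  · intro j; simp
  · intro j h; simp

lemma starConvex_uDc (n : ℕ) : StarConvex ℝ (0 : Fin n → ℝ × ℝ) (uDc n) := by
  intro y hy a b ha hb hab
  have hb1 : b ≤ 1 := by linarith
  obtain ⟨h1, h2⟩ := hy
  have hsm : ∀ j, (a • (0 : Fin n → ℝ × ℝ) + b • y) j
      = (b * (y j).1, b * (y j).2) := by
    intro j; simp [Prod.ext_iff]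
  constructor
  · intro j
    rw [hsm j]
    obtain ⟨hr, hvr⟩ := h1 j
    constructor
    · exact mul_nonneg hb hr
    · simp only [abs_mul, abs_of_nonneg hb]
      calc b * |(y j).1| + b * (y j).2 = b * (|(y j).1| + (y j).2) := by ring
        _ ≤ 1 * 1 := by
            apply mul_le_mul hb1 hvr _ (by norm_num)
            positivity
        _ = 1 := by norm_num
  · intro j h
    rw [hsm j, hsm ⟨(j : ℕ) + 1, h⟩]
    obtain ⟨hmono, hdisj⟩ := h2 j h
    dsimp only
    refine ⟨by nlinarith, ?_⟩
    rcases hdisj with hle | ⟨hz1, hz2⟩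
    · left; nlinarith
    · right; simp [hz1, hz2]

/-- For every `n ≥ 1` the space `uD^c(n)` is contractible. -/
theorem stmt_9 (n : ℕ) (hn : 1 ≤ n) : ContractibleSpace ↥(uDc n) :=
  (starConvex_uDc n).contractibleSpace ⟨0, zero_mem_uDc n⟩
end

section
/- Let m ≥ 1 and q ≥ 0, and let Λ = AddCircle ((m : ℝ)) × Δ, where Δ = {t : Fin (q+1) → ℝ : t_j ≥ 0 for all j and t_0 + … + t_q = 1} is the standard q-simplex. Define τ : Λ → Λ by τ(r̄, (t_0, …, t_q)) = (r̄ − t̄_q, (t_q, t_0, …, t_{q−1})). Then τ is well defined and a homeomorphism, its (q+1)-fold iterate satisfies τ^{q+1}(r̄, t) = (r̄ − 1̄, t), and consequently τ^{m(q+1)} is the identity of Λ. -/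
/-! τ is the restriction of a homeomorphism of `AddCircle m × ℝ^{q+1}` (with inverse
`(r̄, t) ↦ (r̄ + t̄₀, (t₁, …, t_q, t₀))`) whose coordinate part is a cyclic permutation, so it
preserves `Λ`. After `k` steps the circle coordinate has moved by `−(t_q + t_{q−1} + ⋯)` (`k`
terms), so after `q + 1` steps by `−∑ t_j = −1`, while `t` is back where it started; `m` full
turns move it by `−m = 0` in `ℝ/mℤ`. -/

open Set

namespace Stmt13

/-- The ambient twist map `τ(r̄, t) = (r̄ − t̄_q, (t_q, t_0, …, t_{q−1}))` on
`AddCircle m × (Fin (q+1) → ℝ)`. -/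
noncomputable def tauMap (m q : ℕ) :
    AddCircle (m : ℝ) × (Fin (q + 1) → ℝ) → AddCircle (m : ℝ) × (Fin (q + 1) → ℝ) :=
  fun p => (p.1 - ((p.2 (Fin.last q) : ℝ) : AddCircle (m : ℝ)), fun j => p.2 (j - 1))

/-- `Λ = AddCircle m × Δ_q`, where `Δ_q` is the standard `q`-simplex. -/
def Lam (m q : ℕ) : Set (AddCircle (m : ℝ) × (Fin (q + 1) → ℝ)) :=
  {p | (∀ j, 0 ≤ p.2 j) ∧ ∑ j, p.2 j = 1}

end Stmt13

theorem comp_perm_mem_stdSimplex_iff {𝕜 ι : Type*} [Semiring 𝕜] [PartialOrder 𝕜] [Fintype ι]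
    (σ : Equiv.Perm ι) {t : ι → 𝕜} : t ∘ σ ∈ stdSimplex 𝕜 ι ↔ t ∈ stdSimplex 𝕜 ι := by
  change ((∀ i, 0 ≤ t (σ i)) ∧ ∑ i, t (σ i) = 1) ↔ (∀ i, 0 ≤ t i) ∧ ∑ i, t i = 1
  rw [σ.forall_congr_right (q := fun i => 0 ≤ t i), Equiv.sum_comp σ t]

namespace Stmt13

open Fin.NatCast Fin.CommRing

theorem Lam_eq_univ_prod_stdSimplex (m q : ℕ) :
    Lam m q = univ ×ˢ stdSimplex ℝ (Fin (q + 1)) := by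
  ext; simp [Lam, stdSimplex]

noncomputable def tauHomeomorph (m q : ℕ) :
    AddCircle (m : ℝ) × (Fin (q + 1) → ℝ) ≃ₜ AddCircle (m : ℝ) × (Fin (q + 1) → ℝ) where
  toFun := tauMap m q
  invFun p := (p.1 + ((p.2 0 : ℝ) : AddCircle (m : ℝ)), fun j => p.2 (j + 1))
  left_inv p := by
    simp [tauMap, show (-1 : Fin (q + 1)) = Fin.last q from Fin.ext Fin.coe_neg_one]
  right_inv p := by simp [tauMap]
  continuous_toFun := by unfold tauMap; fun_prop
  continuous_invFun := by fun_prop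

theorem tauHomeomorph_preimage_Lam (m q : ℕ) : tauHomeomorph m q ⁻¹' Lam m q = Lam m q := by
  ext p
  simp only [Lam_eq_univ_prod_stdSimplex, mem_preimage, mem_prod, mem_univ, true_and]
  exact comp_perm_mem_stdSimplex_iff (Equiv.subRight 1)

variable {m q : ℕ}

theorem tauMap_iterate (k : ℕ) (p : AddCircle (m : ℝ) × (Fin (q + 1) → ℝ)) :
    (tauMap m q)^[k] p =
      (p.1 - ∑ i ∈ Finset.range k, ((p.2 (Fin.last q - i) : ℝ) : AddCircle (m : ℝ)),
        fun j => p.2 (j - k)) := by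
  induction k with
  | zero => simp
  | succ k ih =>
    rw [Function.iterate_succ_apply', ih]
    ext j
    · simp [tauMap, Finset.sum_range_succ, sub_sub]
    · simp only [tauMap, Nat.cast_succ, sub_sub, add_comm (1 : Fin (q + 1))]

theorem tauMap_iterate_succ_of_sum_eq_one {p : AddCircle (m : ℝ) × (Fin (q + 1) → ℝ)}
    (hp : ∑ j, p.2 j = 1) :
    (tauMap m q)^[q + 1] p = (p.1 - ((1 : ℝ) : AddCircle (m : ℝ)), p.2) := by
  have hsum : ∑ i, ((p.2 (Fin.last q - i) : ℝ) : AddCircle (m : ℝ)) =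
      ((1 : ℝ) : AddCircle (m : ℝ)) :=
    calc _ = ∑ i, ((p.2 i : ℝ) : AddCircle (m : ℝ)) := (Equiv.subLeft (Fin.last q)).sum_comp _
      _ = _ := by
        rw [← hp]
        exact (map_sum (QuotientAddGroup.mk' (AddSubgroup.zmultiples (m : ℝ))) _ _).symm
  rw [tauMap_iterate, ← Fin.sum_univ_eq_sum_range]
  simp only [Fin.cast_val_eq_self, Fin.natCast_self, sub_zero, hsum]

theorem tauMap_iterate_mul_succ_of_sum_eq_one (n : ℕ)
    {p : AddCircle (m : ℝ) × (Fin (q + 1) → ℝ)} (hp : ∑ j, p.2 j = 1) :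
    (tauMap m q)^[n * (q + 1)] p = (p.1 - n • ((1 : ℝ) : AddCircle (m : ℝ)), p.2) := by
  induction n generalizing p with
  | zero => simp
  | succ n ih =>
    rw [Nat.succ_mul, Function.iterate_add_apply, tauMap_iterate_succ_of_sum_eq_one hp,
      ih (p := (p.1 - _, p.2)) hp, succ_nsmul', sub_sub]

theorem stmt_13_general (m q : ℕ) :
    Set.MapsTo (tauMap m q) (Lam m q) (Lam m q) ∧
    (∃ e : ↥(Lam m q) ≃ₜ ↥(Lam m q), ∀ p : ↥(Lam m q), (e p).val = tauMap m q p.val) ∧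
    (∀ p ∈ Lam m q,
      (tauMap m q)^[q + 1] p = (p.1 - ((1 : ℝ) : AddCircle (m : ℝ)), p.2)) ∧
    (∀ p ∈ Lam m q, (tauMap m q)^[m * (q + 1)] p = p) := by
  have hLam := tauHomeomorph_preimage_Lam m q
  refine ⟨mapsTo_iff_subset_preimage.2 hLam.superset,
    ⟨(tauHomeomorph m q).sets hLam.symm, fun _ => rfl⟩,
    fun p hp => tauMap_iterate_succ_of_sum_eq_one hp.2, fun p hp => ?_⟩
  rw [tauMap_iterate_mul_succ_of_sum_eq_one m hp.2, ← AddCircle.coe_nsmul, nsmul_eq_mul, mul_one,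
    AddCircle.coe_period, sub_zero]

/-- The twist `τ(r̄, t) = (r̄ − t̄_q, (t_q, t_0, …, t_{q−1}))` is a
well-defined homeomorphism of `Λ = AddCircle m × Δ_q`, its `(q+1)`-fold iterate is
`(r̄, t) ↦ (r̄ − 1̄, t)`, and its `m(q+1)`-fold iterate is the identity of `Λ`. -/
theorem stmt_13 (m q : ℕ) (hm : 1 ≤ m) :
    Set.MapsTo (tauMap m q) (Lam m q) (Lam m q) ∧
    (∃ e : ↥(Lam m q) ≃ₜ ↥(Lam m q), ∀ p : ↥(Lam m q), (e p).val = tauMap m q p.val) ∧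
    (∀ p ∈ Lam m q,
      (tauMap m q)^[q + 1] p = (p.1 - ((1 : ℝ) : AddCircle (m : ℝ)), p.2)) ∧
    (∀ p ∈ Lam m q, (tauMap m q)^[m * (q + 1)] p = p) :=
  stmt_13_general m q

end Stmt13
end

section
/- For n ≥ 1, let D_ℝ(n) be the subspace of (ℝ × ℝ)^n of tuples ((v_j, r_j))_{0 ≤ j ≤ n−1} with 0 < r_j and |v_j| + r_j ≤ 1 for all j, and such that the open intervals (v_i − r_i, v_i + r_i) and (v_j − r_j, v_j + r_j) are disjoint for all i ≠ j. Let Σ_n = Perm(Fin n) act on D_ℝ(n) by permuting indices: (σ•x)_j = x_{σ⁻¹(j)}. Then: (i) for every x ∈ D_ℝ(n) there is a unique permutation σ(x) ∈ Σ_n such that the reindexed tuple (x_{σ(x)(0)}, …, x_{σ(x)(n−1)}) lies in uD_ℝ(n), i.e. has strictly increasing centers; (ii) the map D_ℝ(n) → uD_ℝ(n) × Σ_n, x ↦ ((x_{σ(x)(j)})_j, σ(x)), is a homeomorphism (Σ_n discrete), and it is Σ_n-equivariant for the action on the target given by ρ·(u, σ) = (u, ρσ). -/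
/-!
The centers of the intervals of a configuration in `D_ℝ(n)` are pairwise distinct, and two
disjoint intervals are ordered like their centers. Hence a configuration lies in `uD_ℝ(n)`
exactly when its centers are strictly increasing, and the unique permutation putting `x` in
this position is the sorting permutation of the centers. This permutation is locally constant,
since strict inequalities between finitely many centers are an open condition; so both the
sorting map and its inverse `(u, σ) ↦ u ∘ σ⁻¹` are continuous.
-/

open Set

/-- The (finite) symmetric group carries the discrete topology. -/
instance (n : ℕ) : TopologicalSpace (Equiv.Perm (Fin n)) := ⊥

/-- The space `D_ℝ(n)` of `n`-tuples of disjoint open intervals with positive radii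
inside `[−1, 1]`. -/
def DR (n : ℕ) : Set (Fin n → ℝ × ℝ) :=
  {x | (∀ j, 0 < (x j).2 ∧ |(x j).1| + (x j).2 ≤ 1) ∧
    ∀ i j, i ≠ j →
      Ioo ((x i).1 - (x i).2) ((x i).1 + (x i).2) ∩
        Ioo ((x j).1 - (x j).2) ((x j).1 + (x j).2) = ∅}

/-- The ordered part `uD_ℝ(n)`. -/
def uDR (n : ℕ) : Set (Fin n → ℝ × ℝ) :=
  {x | (∀ j, 0 < (x j).2 ∧ |(x j).1| + (x j).2 ≤ 1) ∧
    ∀ j : Fin n, ∀ h : (j : ℕ) + 1 < n,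
      (x j).1 + (x j).2 ≤ (x ⟨(j : ℕ) + 1, h⟩).1 - (x ⟨(j : ℕ) + 1, h⟩).2}

open Function

namespace Tuple

theorem eq_sort_iff_strictMono {α : Type*} [LinearOrder α] {n : ℕ} {f : Fin n → α}
    (hf : Injective f) {σ : Equiv.Perm (Fin n)} : σ = sort f ↔ StrictMono (f ∘ σ) := by
  rw [eq_sort_iff]
  refine ⟨fun h => h.1.strictMono_of_injective (hf.comp σ.injective), fun h => ⟨h.monotone, ?_⟩⟩
  intro i j hij hfij
  exact absurd hfij (h hij).ne

end Tuple

theorem add_le_sub_of_Ioo_inter_Ioo_eq_empty {α : Type*} [Field α] [LinearOrder α]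
    [IsStrictOrderedRing α] {a b r s : α} (hr : 0 < r) (hs : 0 < s) (hab : a < b)
    (h : Ioo (a - r) (a + r) ∩ Ioo (b - s) (b + s) = ∅) : a + r ≤ b - s := by
  rw [Ioo_inter_Ioo, Ioo_eq_empty_iff, max_lt_iff, lt_min_iff, lt_min_iff] at h
  by_contra! hlt
  exact h ⟨⟨by linarith, by linarith⟩, by linarith, by linarith⟩

variable {n : ℕ}

namespace DR

variable {x : Fin n → ℝ × ℝ}

theorem center_injective (hx : x ∈ DR n) : Injective fun j => (x j).1 := by
  intro i j hij
  by_contra hne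
  have hri := (hx.1 i).1
  have hrj := (hx.1 j).1
  refine (eq_empty_iff_forall_notMem.mp (hx.2 i j hne)) (x i).1 ⟨⟨?_, ?_⟩, ?_, ?_⟩ <;>
    simp only at hij <;> linarith

theorem add_le_sub_of_center_lt (hx : x ∈ DR n) {i j : Fin n} (hij : (x i).1 < (x j).1) :
    (x i).1 + (x i).2 ≤ (x j).1 - (x j).2 :=
  add_le_sub_of_Ioo_inter_Ioo_eq_empty (hx.1 i).1 (hx.1 j).1 hij
    (hx.2 i j fun h => hij.ne (by rw [h]))

theorem comp_perm_mem (hx : x ∈ DR n) (σ : Equiv.Perm (Fin n)) : x ∘ σ ∈ DR n :=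
  ⟨fun j => hx.1 (σ j), fun i j hij => hx.2 (σ i) (σ j) (σ.injective.ne hij)⟩

end DR

namespace uDR

variable {u : Fin n → ℝ × ℝ}

theorem add_le_sub (hu : u ∈ uDR n) {i j : Fin n} (hij : i < j) :
    (u i).1 + (u i).2 ≤ (u j).1 - (u j).2 := by
  obtain ⟨k, hk⟩ := j
  induction k with
  | zero => exact absurd (Fin.lt_def.mp hij) (Nat.not_lt_zero _)
  | succ k ih =>
    have hstep := hu.2 ⟨k, by omega⟩ hk
    rcases Nat.lt_succ_iff_lt_or_eq.mp (Fin.lt_def.mp hij) with hlt | rfl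
    · have := ih (by omega) hlt
      have := (hu.1 ⟨k, by omega⟩).1
      linarith
    · exact hstep

theorem center_strictMono (hu : u ∈ uDR n) : StrictMono fun j => (u j).1 := by
  intro i j hij
  have := add_le_sub hu hij
  have := (hu.1 i).1
  have := (hu.1 j).1
  simp only
  linarith

theorem subset_DR : uDR n ⊆ DR n := by
  intro u hu
  refine ⟨hu.1, fun i j hij => ?_⟩
  have disjoint_of_lt : ∀ {a b : Fin n}, a < b →
      Ioo ((u a).1 - (u a).2) ((u a).1 + (u a).2) ∩
        Ioo ((u b).1 - (u b).2) ((u b).1 + (u b).2) = ∅ := by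
    intro a b hab
    have := add_le_sub hu hab
    ext t
    simp only [mem_inter_iff, mem_Ioo, mem_empty_iff_false, iff_false, not_and]
    intros
    linarith
  rcases hij.lt_or_gt with h | h
  · exact disjoint_of_lt h
  · rw [inter_comm]
    exact disjoint_of_lt h

end uDR

theorem DR.comp_perm_mem_uDR_iff {x : Fin n → ℝ × ℝ} (hx : x ∈ DR n) (σ : Equiv.Perm (Fin n)) :
    x ∘ σ ∈ uDR n ↔ StrictMono fun j => (x (σ j)).1 := by
  refine ⟨uDR.center_strictMono, fun hmono => ⟨fun j => hx.1 (σ j), fun j hj => ?_⟩⟩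
  exact DR.add_le_sub_of_center_lt hx (hmono (Fin.lt_def.mpr (Nat.lt_add_one _)))

noncomputable def sortPerm (x : Fin n → ℝ × ℝ) : Equiv.Perm (Fin n) :=
  Tuple.sort fun j => (x j).1

theorem DR.comp_perm_mem_uDR_iff_eq_sortPerm {x : Fin n → ℝ × ℝ} (hx : x ∈ DR n)
    (σ : Equiv.Perm (Fin n)) : x ∘ σ ∈ uDR n ↔ σ = sortPerm x := by
  rw [DR.comp_perm_mem_uDR_iff hx, sortPerm, Tuple.eq_sort_iff_strictMono (DR.center_injective hx)]
  rfl

theorem DR.comp_sortPerm_mem_uDR {x : Fin n → ℝ × ℝ} (hx : x ∈ DR n) :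
    x ∘ sortPerm x ∈ uDR n :=
  (DR.comp_perm_mem_uDR_iff_eq_sortPerm hx _).mpr rfl

instance : DiscreteTopology (Equiv.Perm (Fin n)) := ⟨rfl⟩

theorem continuous_sortPerm : Continuous fun x : DR n => sortPerm x.1 := by
  refine continuous_discrete_rng.mpr fun σ => ?_
  have hpre : (fun x : DR n => sortPerm x.1) ⁻¹' {σ} =
      {x : DR n | ∀ i j, i < j → (x.1 (σ i)).1 < (x.1 (σ j)).1} := by
    ext x
    rw [mem_preimage, mem_singleton_iff, eq_comm, ← DR.comp_perm_mem_uDR_iff_eq_sortPerm x.2,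
      DR.comp_perm_mem_uDR_iff x.2]
    rfl
  have hcenter (i : Fin n) : Continuous fun x : DR n => (x.1 i).1 :=
    continuous_fst.comp ((continuous_apply i).comp continuous_subtype_val)
  rw [hpre]
  simp only [ofPred_forall]
  exact isOpen_iInter_of_finite fun i => isOpen_iInter_of_finite fun j =>
    isOpen_iInter_of_finite fun _ => isOpen_lt (hcenter _) (hcenter _)

theorem continuous_comp_perm {X : Type*} [TopologicalSpace X] :
    Continuous fun p : (Fin n → X) × Equiv.Perm (Fin n) => p.1 ∘ p.2 :=
  continuous_prod_of_discrete_right.mpr fun σ => continuous_pi fun j => continuous_apply (σ j)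

noncomputable def sortHomeomorph : DR n ≃ₜ uDR n × Equiv.Perm (Fin n) where
  toFun x := (⟨x.1 ∘ sortPerm x.1, DR.comp_sortPerm_mem_uDR x.2⟩, sortPerm x.1)
  invFun p := ⟨p.1.1 ∘ ⇑p.2⁻¹, DR.comp_perm_mem (uDR.subset_DR p.1.2) _⟩
  left_inv x := by
    ext1
    simp [comp_assoc]
  right_inv p := by
    have hsort : sortPerm (p.1.1 ∘ ⇑p.2⁻¹) = p.2 := by
      refine ((DR.comp_perm_mem_uDR_iff_eq_sortPerm
        (DR.comp_perm_mem (uDR.subset_DR p.1.2) _) p.2).mp ?_).symm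
      simp [comp_assoc]
    ext1
    · ext1
      change p.1.1 ∘ ⇑p.2⁻¹ ∘ sortPerm (p.1.1 ∘ ⇑p.2⁻¹) = p.1.1
      rw [hsort]
      simp
    · exact hsort
  continuous_toFun :=
    ((continuous_comp_perm.comp (continuous_subtype_val.prodMk continuous_sortPerm)).subtype_mk
      _).prodMk continuous_sortPerm
  continuous_invFun :=
    (continuous_comp_perm.comp ((continuous_subtype_val.comp continuous_fst).prodMk
      (continuous_of_discreteTopology.comp continuous_snd))).subtype_mk _

theorem sortPerm_comp_perm_inv {x : Fin n → ℝ × ℝ} (hx : x ∈ DR n) (ρ : Equiv.Perm (Fin n)) :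
    sortPerm (x ∘ ⇑ρ⁻¹) = ρ * sortPerm x := by
  refine ((DR.comp_perm_mem_uDR_iff_eq_sortPerm (DR.comp_perm_mem hx ρ⁻¹) _).mp ?_).symm
  convert DR.comp_sortPerm_mem_uDR hx using 1
  funext j
  simp

theorem sortHomeomorph_comp_perm_inv (ρ : Equiv.Perm (Fin n)) (x : DR n)
    (hx : x.1 ∘ ⇑ρ⁻¹ ∈ DR n) :
    sortHomeomorph ⟨x.1 ∘ ⇑ρ⁻¹, hx⟩ = ((sortHomeomorph x).1, ρ * (sortHomeomorph x).2) := by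
  have hsort := sortPerm_comp_perm_inv x.2 ρ
  ext1
  · ext1
    change x.1 ∘ ⇑ρ⁻¹ ∘ sortPerm (x.1 ∘ ⇑ρ⁻¹) = x.1 ∘ sortPerm x.1
    rw [hsort]
    funext j
    simp
  · exact hsort

theorem stmt_16_general (n : ℕ) :
    (∀ x ∈ DR n, ∃! σ : Equiv.Perm (Fin n), (fun j => x (σ j)) ∈ uDR n) ∧
    ∃ e : ↥(DR n) ≃ₜ (↥(uDR n) × Equiv.Perm (Fin n)),
      (∀ x : ↥(DR n), ((e x).1 : Fin n → ℝ × ℝ) = fun j => x.val ((e x).2 j)) ∧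
      (∀ ρ : Equiv.Perm (Fin n),
        Set.MapsTo (fun x : Fin n → ℝ × ℝ => fun j => x (ρ⁻¹ j)) (DR n) (DR n)) ∧
      (∀ (ρ : Equiv.Perm (Fin n)) (x : ↥(DR n))
        (hx : (fun j => x.val (ρ⁻¹ j)) ∈ DR n),
        e ⟨fun j => x.val (ρ⁻¹ j), hx⟩ = ((e x).1, ρ * (e x).2)) := by
  exact ⟨fun x hx => ⟨sortPerm x, DR.comp_sortPerm_mem_uDR hx,
    fun σ hσ => (DR.comp_perm_mem_uDR_iff_eq_sortPerm hx σ).mp hσ⟩,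
    sortHomeomorph, fun x => rfl, fun ρ x hx => DR.comp_perm_mem hx ρ⁻¹,
    sortHomeomorph_comp_perm_inv⟩

/-- (i) Every `x ∈ D_ℝ(n)` admits a unique permutation `σ(x)` such
that the reindexed tuple `(x_{σ(x)(0)}, …, x_{σ(x)(n−1)})` lies in `uD_ℝ(n)`; (ii) the
map `x ↦ ((x_{σ(x)(j)})_j, σ(x))` is a homeomorphism `D_ℝ(n) ≅ uD_ℝ(n) × Σ_n`, and it is
`Σ_n`-equivariant for the action `(σ • x)_j = x_{σ⁻¹(j)}` on the source and
`ρ · (u, σ) = (u, ρσ)` on the target. -/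
theorem stmt_16 (n : ℕ) (hn : 1 ≤ n) :
    (∀ x ∈ DR n, ∃! σ : Equiv.Perm (Fin n), (fun j => x (σ j)) ∈ uDR n) ∧
    ∃ e : ↥(DR n) ≃ₜ (↥(uDR n) × Equiv.Perm (Fin n)),
      (∀ x : ↥(DR n), ((e x).1 : Fin n → ℝ × ℝ) = fun j => x.val ((e x).2 j)) ∧
      (∀ ρ : Equiv.Perm (Fin n),
        Set.MapsTo (fun x : Fin n → ℝ × ℝ => fun j => x (ρ⁻¹ j)) (DR n) (DR n)) ∧
      (∀ (ρ : Equiv.Perm (Fin n)) (x : ↥(DR n))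
        (hx : (fun j => x.val (ρ⁻¹ j)) ∈ DR n),
        e ⟨fun j => x.val (ρ⁻¹ j), hx⟩ = ((e x).1, ρ * (e x).2)) :=
  stmt_16_general n
end
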